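/- Let D be a commutative integral domain, s ∈ D^n with n ≥ 2, and suppose the minimal polynomial μ of the prefix s^(n−1) has degree L with Δ_n(μ) ≠ 0 and n − 2L > 0. Then LC(s) = n − L. -/

import Mathlib

open Polynomial Finset

/-- `f` is a (nonzero) annihilator of the finite sequence `s_1,…,s_n`:
`f_0 s_{j-d} + … + f_d s_j = 0` for all `d+1 ≤ j ≤ n`, where `d = deg f`. -/
def Annih (D : Type*) [CommRing D] (s : ℕ → D) (n : ℕ) (f : Polynomial D) : Prop :=
  f ≠ 0 ∧ ∀ j : ℕ, f.natDegree + 1 ≤ j → j ≤ n →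
    ∑ k ∈ Finset.range (f.natDegree + 1), f.coeff k * s (j - f.natDegree + k) = 0

/-- The linear complexity of `s_1,…,s_n`: minimal degree of a nonzero annihilator. -/
noncomputable def LC (D : Type*) [CommRing D] (s : ℕ → D) (n : ℕ) : ℕ :=
  sInf {d : ℕ | ∃ f : Polynomial D, Annih D s n f ∧ f.natDegree = d}

/-- The discrepancy `Δ_n(f) = Σ_{k=0}^{d} f_k s_{n-d+k}`. -/
def disc (D : Type*) [CommRing D] (s : ℕ → D) (n : ℕ) (f : Polynomial D) : D :=
  ∑ k ∈ Finset.range (f.natDegree + 1), f.coeff k * s (n - f.natDegree + k)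

/-!
Pair a polynomial `f` with the sequence `s` shifted by `p` as `Σₖ fₖ s_{p+k}`; then
`⟨g * f, s⟩ = ⟨g, ⟨f, s⟩⟩`. Lower bound: if `g` annihilates `s₁, …, sₙ` with `deg g + L < n`,
pairing `g * μ` with a suitable shift of `s` gives `0` one way and `lc(g) · Δₙ(μ) ≠ 0` the other.
Upper bound (Berlekamp–Massey): let `m + 1` be the index at which the linear complexity last jumped,
`μ'` a minimal polynomial of `s₁, …, sₘ` and `Δ' ≠ 0` its discrepancy. Then
`Δ' X^{N-L} μ - Δₙ X^{N+L-n} μ'` annihilates `s₁, …, sₙ` and has degree `N = max L (n - L)`: by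
induction on `n` the earlier jump satisfied `L + deg μ' = m + 1`, so at the last index the two
discrepancies cancel and before it both terms vanish.
-/

section

variable {D : Type*} [CommRing D]

noncomputable def seqEval (s : ℕ → D) (p : ℕ) : D[X] →ₗ[D] D :=
  lsum fun k => LinearMap.mulRight D (s (p + k))

theorem seqEval_apply (s : ℕ → D) (p : ℕ) (f : D[X]) :
    seqEval s p f = ∑ k ∈ range (f.natDegree + 1), f.coeff k * s (p + k) :=
  sum_over_range f fun _ => zero_mul _

theorem seqEval_monomial (s : ℕ → D) (p j : ℕ) (a : D) :
    seqEval s p (monomial j a) = a * s (p + j) :=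
  sum_monomial_index a _ (zero_mul _)

theorem seqEval_monomial_mul (s : ℕ → D) (p j : ℕ) (a : D) (f : D[X]) :
    seqEval s p (monomial j a * f) = a * seqEval s (p + j) f := by
  induction f using Polynomial.induction_on' with
  | add f₁ f₂ h₁ h₂ => rw [mul_add, map_add, map_add, h₁, h₂, mul_add]
  | monomial i b =>
    rw [monomial_mul_monomial, seqEval_monomial, seqEval_monomial, add_assoc, mul_assoc]

theorem seqEval_mul (s : ℕ → D) (p : ℕ) (g f : D[X]) :
    seqEval s p (g * f) = seqEval (fun i => seqEval s i f) p g := by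
  induction g using Polynomial.induction_on' with
  | add g₁ g₂ h₁ h₂ => rw [add_mul, map_add, map_add, h₁, h₂]
  | monomial j a => rw [seqEval_monomial_mul, seqEval_monomial]

theorem seqEval_eq_leadingCoeff_mul {s : ℕ → D} {p : ℕ} {f : D[X]}
    (h : ∀ k < f.natDegree, s (p + k) = 0) :
    seqEval s p f = f.leadingCoeff * s (p + f.natDegree) := by
  rw [seqEval_apply, sum_range_succ,
    sum_eq_zero fun k hk => by rw [h k (mem_range.1 hk), mul_zero], zero_add]
  rfl

theorem seqEval_eq_zero {s : ℕ → D} {p : ℕ} {f : D[X]} (h : ∀ k ≤ f.natDegree, s (p + k) = 0) :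
    seqEval s p f = 0 := by
  rw [seqEval_eq_leadingCoeff_mul fun k hk => h k hk.le, h _ le_rfl, mul_zero]

theorem disc_eq_seqEval (s : ℕ → D) (n : ℕ) (f : D[X]) :
    disc D s n f = seqEval s (n - f.natDegree) f :=
  (seqEval_apply _ _ _).symm

theorem annih_iff {s : ℕ → D} {n : ℕ} {f : D[X]} :
    Annih D s n f ↔ f ≠ 0 ∧ ∀ p, 0 < p → f.natDegree + p ≤ n → seqEval s p f = 0 := by
  simp only [Annih, seqEval_apply]
  refine and_congr_right fun _ => ⟨fun h p hp hpn => ?_, fun h j hj hjn => h _ (by omega) (by omega)⟩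
  simpa using h (f.natDegree + p) (by omega) hpn

theorem Annih.seqEval_eq_zero {s : ℕ → D} {n p : ℕ} {f : D[X]} (hf : Annih D s n f) (hp : 0 < p)
    (hpn : f.natDegree + p ≤ n) : seqEval s p f = 0 :=
  (annih_iff.1 hf).2 p hp hpn

theorem Annih.mono {s : ℕ → D} {m n : ℕ} {f : D[X]} (hf : Annih D s n f) (h : m ≤ n) :
    Annih D s m f :=
  ⟨hf.1, fun j hj hjm => hf.2 j hj (hjm.trans h)⟩

theorem Annih.succ_of_disc_eq_zero {s : ℕ → D} {m : ℕ} {f : D[X]} (hf : Annih D s m f)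
    (hΔ : disc D s (m + 1) f = 0) : Annih D s (m + 1) f := by
  refine annih_iff.2 ⟨hf.1, fun p hp hpm => ?_⟩
  rcases hpm.lt_or_eq with hlt | heq
  · exact hf.seqEval_eq_zero hp (by omega)
  · rwa [disc_eq_seqEval, ← heq, Nat.add_sub_cancel_left] at hΔ

theorem annih_X_pow [Nontrivial D] (s : ℕ → D) (n : ℕ) : Annih D s n (X ^ n) :=
  ⟨(monic_X_pow n).ne_zero, fun j hj hjn => absurd hj (by rw [natDegree_X_pow]; omega)⟩

theorem LC_le_natDegree {s : ℕ → D} {n : ℕ} {f : D[X]} (hf : Annih D s n f) :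
    LC D s n ≤ f.natDegree :=
  Nat.sInf_le ⟨f, hf, rfl⟩

theorem exists_annih_natDegree_eq_LC [Nontrivial D] (s : ℕ → D) (n : ℕ) :
    ∃ f, Annih D s n f ∧ f.natDegree = LC D s n :=
  Nat.sInf_mem (s := {d | ∃ f, Annih D s n f ∧ f.natDegree = d})
    ⟨n, X ^ n, annih_X_pow s n, natDegree_X_pow n⟩

theorem LC_le_self [Nontrivial D] (s : ℕ → D) (n : ℕ) : LC D s n ≤ n :=
  (LC_le_natDegree (annih_X_pow s n)).trans_eq (natDegree_X_pow n)

theorem LC_mono [Nontrivial D] (s : ℕ → D) {m n : ℕ} (h : m ≤ n) : LC D s m ≤ LC D s n := by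
  obtain ⟨f, hf, hdeg⟩ := exists_annih_natDegree_eq_LC s n
  exact hdeg ▸ LC_le_natDegree (hf.mono h)

end

section

variable {D : Type*} [CommRing D] [IsDomain D] {s : ℕ → D}

theorem le_natDegree_add_of_disc_ne_zero {n : ℕ} {μ g : D[X]} (hμ : Annih D s n μ)
    (hΔ : disc D s (n + 1) μ ≠ 0) (hg : Annih D s (n + 1) g) :
    n + 1 ≤ g.natDegree + μ.natDegree := by
  by_contra! hlt
  set q := n + 1 - μ.natDegree - g.natDegree with hq
  -- Evaluate `Σ_{j,k} gⱼ μₖ s_{q+j+k}` summing over `k` first and over `j` first.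
  have hμg : seqEval (fun i => seqEval s i μ) q g = g.leadingCoeff * disc D s (n + 1) μ := by
    rw [seqEval_eq_leadingCoeff_mul fun k hk => hμ.seqEval_eq_zero (by omega) (by omega),
      disc_eq_seqEval]
    congr 3
    omega
  have hgμ : seqEval (fun i => seqEval s i g) q μ = 0 :=
    seqEval_eq_zero fun k hk => hg.seqEval_eq_zero (by omega) (by omega)
  rw [← seqEval_mul, mul_comm, seqEval_mul, hgμ] at hμg
  exact mul_ne_zero (leadingCoeff_ne_zero.2 hg.1) hΔ hμg.symm

theorem sub_le_LC_of_disc_ne_zero {n : ℕ} {μ : D[X]} (hμ : Annih D s n μ)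
    (hΔ : disc D s (n + 1) μ ≠ 0) : n + 1 - μ.natDegree ≤ LC D s (n + 1) := by
  obtain ⟨g, hg, hdeg⟩ := exists_annih_natDegree_eq_LC s (n + 1)
  have := le_natDegree_add_of_disc_ne_zero hμ hΔ hg
  omega

theorem exists_annih_natDegree_eq_of_jump {m n N : ℕ} {μ μ' : D[X]} (hμ : Annih D s n μ)
    (hμ' : Annih D s m μ') (hΔ' : disc D s (m + 1) μ' ≠ 0)
    (hjump : μ.natDegree + μ'.natDegree = m + 1) (hmn : m < n)
    (hLN : μ.natDegree ≤ N) (hnN : n + 1 ≤ N + μ.natDegree) :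
    ∃ f, Annih D s (n + 1) f ∧ f.natDegree = N := by
  set L := μ.natDegree
  set Δ' := disc D s (m + 1) μ'
  set Δ := disc D s (n + 1) μ
  set f₁ := monomial (N - L) Δ' * μ
  set f₂ := monomial (N + L - (n + 1)) Δ * μ'
  have hf₁ : f₁.natDegree = N := by
    rw [natDegree_mul ((monomial_eq_zero_iff _ _).not.2 hΔ') hμ.1, natDegree_monomial_eq _ hΔ']
    omega
  have hf₂ : f₂.natDegree < N :=
    natDegree_mul_le.trans_lt (by have := natDegree_monomial_le Δ (m := N + L - (n + 1)); omega)
  have hf : (f₁ - f₂).natDegree = N := by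
    rw [natDegree_sub_eq_left_of_natDegree_lt (hf₁ ▸ hf₂), hf₁]
  refine ⟨f₁ - f₂, annih_iff.2 ⟨ne_zero_of_natDegree_gt (n := 0) (by omega), fun p hp hpn => ?_⟩, hf⟩
  rw [hf] at hpn
  rw [map_sub, seqEval_monomial_mul, seqEval_monomial_mul]
  rcases hpn.lt_or_eq with hlt | heq
  · rw [hμ.seqEval_eq_zero (by omega) (by omega), hμ'.seqEval_eq_zero (by omega) (by omega)]
    ring
  · -- At the last index both terms equal `Δ' Δ`.
    have h₁ : p + (N - L) = n + 1 - L := by omega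
    have h₂ : p + (N + L - (n + 1)) = m + 1 - μ'.natDegree := by omega
    rw [h₁, h₂, ← disc_eq_seqEval, ← disc_eq_seqEval]
    ring

theorem LC_succ_le_max (s : ℕ → D) (n : ℕ) :
    LC D s (n + 1) ≤ max (LC D s n) (n + 1 - LC D s n) := by
  induction n using Nat.strong_induction_on with
  | _ n ih =>
  set L := LC D s n
  rcases Nat.eq_zero_or_pos L with hL | hL
  · rw [hL]
    exact (LC_le_self s _).trans_eq (by simp)
  obtain ⟨m, hm, hm₁⟩ := Nat.exists_not_and_succ_of_not_zero_of_exists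
    (p := fun m => L ≤ LC D s m) (by simpa using (LC_le_self s 0).trans_lt hL) ⟨n, le_rfl⟩
  have hmn : m < n := lt_of_not_ge fun h => hm (LC_mono s h)
  have hLm : LC D s (m + 1) = L := le_antisymm (LC_mono s hmn) hm₁
  obtain ⟨μ', hμ', hμ'deg⟩ := exists_annih_natDegree_eq_LC s m
  have hΔ' : disc D s (m + 1) μ' ≠ 0 := fun h => by
    have := LC_le_natDegree (hμ'.succ_of_disc_eq_zero h)
    omega
  have hjump : L + LC D s m = m + 1 := by
    have hub := ih m hmn
    have hlb := sub_le_LC_of_disc_ne_zero hμ' hΔ'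
    rw [hLm] at hub hlb
    omega
  obtain ⟨μ, hμ, hμdeg⟩ := exists_annih_natDegree_eq_LC s n
  obtain ⟨f, hf, hfdeg⟩ := exists_annih_natDegree_eq_of_jump (N := max L (n + 1 - L))
    hμ hμ' hΔ' (by omega) hmn (by omega) (by omega)
  exact hfdeg ▸ LC_le_natDegree hf

end

theorem LC_jump_general (D : Type*) [CommRing D] [IsDomain D]
    (n : ℕ) (s : ℕ → D) (μ : Polynomial D)
    (hann : Annih D s (n - 1) μ)
    (hmin : ∀ g, Annih D s (n - 1) g → μ.natDegree ≤ g.natDegree)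
    (hΔ : disc D s n μ ≠ 0)
    (hL : 2 * μ.natDegree < n) :
    LC D s n = n - μ.natDegree := by
  obtain ⟨k, rfl⟩ : ∃ k, n = k + 1 := ⟨n - 1, by omega⟩
  rw [Nat.add_sub_cancel] at hann hmin
  have hLC : LC D s k = μ.natDegree := by
    obtain ⟨g, hg, hdeg⟩ := exists_annih_natDegree_eq_LC s k
    exact le_antisymm (LC_le_natDegree hann) (hdeg ▸ hmin g hg)
  refine le_antisymm ?_ (sub_le_LC_of_disc_ne_zero hann hΔ)
  have := LC_succ_le_max s k
  rw [hLC] at this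
  omega

theorem LC_jump (D : Type*) [CommRing D] [IsDomain D]
    (n : ℕ) (hn : 2 ≤ n) (s : ℕ → D) (μ : Polynomial D)
    (hann : Annih D s (n - 1) μ)
    (hmin : ∀ g, Annih D s (n - 1) g → μ.natDegree ≤ g.natDegree)
    (hΔ : disc D s n μ ≠ 0)
    (hL : 2 * μ.natDegree < n) :
    LC D s n = n - μ.natDegree :=
  LC_jump_general D n s μ hann hmin hΔ hL
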